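/- arXiv:2504.16962 — 2 statements merged into one kernel-verified Lean document; each statement's English description precedes it below -/
import Mathlib

section
/- Let $f : M \to \mathbb{R}$ be a Morse-Bott-Smale function on a closed manifold and $B$, $B'$ critical submanifolds with $\dim B = b$. If the intersection $W(B,B') = W^u(B) \cap W^s(B')$ is nonempty, then it is a submanifold of $M$ of dimension $\operatorname{ind} B - \operatorname{ind} B' + b$; in particular this dimension does not depend on $\dim B'$. -/
/-!
Through the preimages under the two embeddings, `W(B, B') = range σ₁ ∩ range σ₂` is homeomorphic
to the fibre product `Z = {(x₁, x₂) | σ₁ x₁ = σ₂ x₂} ⊆ P₁ × P₂`. In charts around a point of `Z`,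
`Z` is the zero set of `(w₁, w₂) ↦ σ₁ w₁ - σ₂ w₂`, whose derivative is surjective precisely by
transversality. Completing this map by a linear coordinate on a complement of the kernel and
applying the inverse function theorem gives charts of `P₁ × P₂` in which `Z` is the coordinate
slice `{0} × ℝᵏ`, `k = dim P₁ + dim P₂ - dim M = ind B - ind B' + b`. These charts are smoothly
compatible with each other, hence so are the induced charts of the slices.
-/

open scoped Manifold ContDiff
open Set Function Topology Module

/-- The canonical identification of the tangent space of a manifold modelled on
`ℝ^m` with `ℝ^m` itself. -/
def tangentToE {m : ℕ} {X : Type*} [TopologicalSpace X]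
    [ChartedSpace (EuclideanSpace ℝ (Fin m)) X] {x : X}
    (v : TangentSpace (𝓡 m) x) : EuclideanSpace ℝ (Fin m) := v

theorem Function.Surjective.coprod_neg {R M M₁ M₂ : Type*} [Ring R] [TopologicalSpace M]
    [AddCommGroup M] [Module R M] [IsTopologicalAddGroup M] [TopologicalSpace M₁]
    [AddCommGroup M₁] [Module R M₁] [TopologicalSpace M₂] [AddCommGroup M₂] [Module R M₂]
    {f : M₁ →L[R] M} {g : M₂ →L[R] M} (h : Surjective (f.coprod g)) :
    Surjective (f.coprod (-g)) := fun v => by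
  obtain ⟨u, rfl⟩ := h v
  exact ⟨(u.1, -u.2), by simp⟩

section Calculus

variable {𝕜 : Type*} [RCLike 𝕜] {E F G : Type*}
  [NormedAddCommGroup E] [NormedSpace 𝕜 E] [NormedAddCommGroup F] [NormedSpace 𝕜 F]
  [NormedAddCommGroup G] [NormedSpace 𝕜 G]

theorem ContinuousLinearMap.exists_equiv_prod_fst_eq [FiniteDimensional 𝕜 E]
    [FiniteDimensional 𝕜 G] (L : E →L[𝕜] F) (hL : Surjective L)
    (hdim : finrank 𝕜 E = finrank 𝕜 F + finrank 𝕜 G) :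
    ∃ A : E ≃L[𝕜] F × G, ∀ v, (A v).1 = L v := by
  have hrange : LinearMap.range (L : E →ₗ[𝕜] F) = ⊤ := LinearMap.range_eq_top.2 hL
  have hker : finrank 𝕜 (LinearMap.ker (L : E →ₗ[𝕜] F)) = finrank 𝕜 G := by
    have := LinearMap.finrank_range_add_finrank_ker (L : E →ₗ[𝕜] F)
    rw [hrange, finrank_top] at this
    omega
  obtain ⟨C, hC⟩ := (LinearMap.ker (L : E →ₗ[𝕜] F)).exists_isCompl
  let g : E →ₗ[𝕜] G :=
    (LinearEquiv.ofFinrankEq _ G hker).toLinearMap ∘ₗ Submodule.projectionOnto _ C hC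
  have hg_range : LinearMap.range g = ⊤ := by
    rw [LinearMap.range_comp_of_range_eq_top _ (Submodule.range_projectionOnto hC),
      LinearEquiv.range]
  have hg_ker : LinearMap.ker g = C := by
    rw [LinearEquiv.ker_comp, Submodule.ker_projectionOnto]
  let A := LinearMap.equivProdOfSurjectiveOfIsCompl _ g hrange hg_range (hg_ker ▸ hC)
  exact ⟨A.toContinuousLinearEquiv, fun v => rfl⟩

theorem ContDiffOn.exists_openPartialHomeomorph_contDiffOn_symm [CompleteSpace E]
    {f : E → F} {U : Set E} {n : WithTop ℕ∞} (hf : ContDiffOn 𝕜 n f U) (hU : IsOpen U)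
    (hn : 1 ≤ n) {a : E} (ha : a ∈ U) {f' : E ≃L[𝕜] F}
    (hf' : HasFDerivAt f (f' : E →L[𝕜] F) a) :
    ∃ e : OpenPartialHomeomorph E F, ⇑e = f ∧ a ∈ e.source ∧ e.source ⊆ U ∧
      ContDiffOn 𝕜 n e.symm e.target := by
  have hn0 : n ≠ 0 := (zero_lt_one.trans_le hn).ne'
  -- Invertibility of the derivative is an open condition; on the source shrunk to where it
  -- holds, the local inverse is smooth at every point of the target, not only at `f a`.
  set W := U ∩ fderiv 𝕜 f ⁻¹' range ((↑) : (E ≃L[𝕜] F) → E →L[𝕜] F)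
  have hW : IsOpen W :=
    (hf.continuousOn_fderiv_of_isOpen hU hn).isOpen_inter_preimage hU ContinuousLinearEquiv.isOpen
  let e₀ := (hf.contDiffAt (hU.mem_nhds ha)).toOpenPartialHomeomorph f hf' hn0
  refine ⟨e₀.restrOpen W hW, rfl,
    ⟨ContDiffAt.mem_toOpenPartialHomeomorph_source _ hf' hn0, ha, f', hf'.fderiv.symm⟩,
    fun x hx => hx.2.1, fun y hy => ?_⟩
  have hyW : e₀.symm y ∈ W := by simpa using (e₀.restrOpen W hW).map_target hy |>.2
  obtain ⟨B, hB⟩ := hyW.2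
  have hfy : ContDiffAt 𝕜 n f (e₀.symm y) := hf.contDiffAt (hU.mem_nhds hyW.1)
  have hBy : HasFDerivAt f (B : E →L[𝕜] F) (e₀.symm y) :=
    hB ▸ (hfy.differentiableAt hn0).hasFDerivAt
  exact (e₀.contDiffAt_symm hy.1 hBy hfy).contDiffWithinAt

theorem ContDiffOn.exists_openPartialHomeomorph_fst_eq [FiniteDimensional 𝕜 E]
    [FiniteDimensional 𝕜 G] {h : E → F} {U : Set E} {n : WithTop ℕ∞} (hh : ContDiffOn 𝕜 n h U)
    (hU : IsOpen U) (hn : 1 ≤ n) {a : E} (ha : a ∈ U) {h' : E →L[𝕜] F}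
    (hh' : HasFDerivAt h h' a) (hsurj : Surjective h')
    (hdim : finrank 𝕜 E = finrank 𝕜 F + finrank 𝕜 G) :
    ∃ Φ : OpenPartialHomeomorph E (F × G), a ∈ Φ.source ∧ Φ.source ⊆ U ∧ (∀ w, (Φ w).1 = h w) ∧
      ContDiffOn 𝕜 n Φ Φ.source ∧ ContDiffOn 𝕜 n Φ.symm Φ.target := by
  have := FiniteDimensional.complete 𝕜 E
  obtain ⟨A, hA⟩ := h'.exists_equiv_prod_fst_eq hsurj hdim
  let A₂ : E →L[𝕜] G := (ContinuousLinearMap.snd 𝕜 F G).comp (A : E →L[𝕜] F × G)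
  have hsnd : ContDiff 𝕜 n A₂ := A₂.contDiff
  have hA' : HasFDerivAt (fun w => (h w, A₂ w)) (A : E →L[𝕜] F × G) a :=
    (hh'.prodMk A₂.hasFDerivAt).congr_fderiv
      (ContinuousLinearMap.ext fun v => Prod.ext (hA v).symm rfl)
  obtain ⟨Φ, hΦ, haΦ, hΦU, hΦsymm⟩ :=
    (hh.prodMk hsnd.contDiffOn).exists_openPartialHomeomorph_contDiffOn_symm hU hn ha hA'
  refine ⟨Φ, haΦ, hΦU, fun w => by rw [hΦ], ?_, hΦsymm⟩
  rw [hΦ]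
  exact (hh.prodMk hsnd.contDiffOn).mono hΦU

theorem HasFDerivAt.sub_prod {f₁ : E → G} {f₂ : F → G} {D₁ : E →L[𝕜] G} {D₂ : F →L[𝕜] G}
    {a₁ : E} {a₂ : F} (h₁ : HasFDerivAt f₁ D₁ a₁) (h₂ : HasFDerivAt f₂ D₂ a₂) :
    HasFDerivAt (fun w : E × F => f₁ w.1 - f₂ w.2) (D₁.coprod (-D₂)) (a₁, a₂) := by
  refine ((h₁.comp (a₁, a₂) (hasFDerivAt_fst (𝕜 := 𝕜) (p := (a₁, a₂)))).sub
    (h₂.comp (a₁, a₂) (hasFDerivAt_snd (𝕜 := 𝕜) (p := (a₁, a₂))))).congr_fderiv ?_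
  exact ContinuousLinearMap.ext fun w => by simp [sub_eq_add_neg]

theorem OpenPartialHomeomorph.contDiffOn_trans_symm_trans_trans {X : Type*} [TopologicalSpace X]
    {n : WithTop ℕ∞} {e e' : OpenPartialHomeomorph X E} {Φ Φ' : OpenPartialHomeomorph E F}
    (he : ContDiffOn 𝕜 n (e.symm ≫ₕ e') (e.symm ≫ₕ e').source)
    (hΦ : ContDiffOn 𝕜 n Φ.symm Φ.target) (hΦ' : ContDiffOn 𝕜 n Φ' Φ'.source) :
    ContDiffOn 𝕜 n ((e ≫ₕ Φ).symm ≫ₕ (e' ≫ₕ Φ')) ((e ≫ₕ Φ).symm ≫ₕ (e' ≫ₕ Φ')).source := by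
  refine hΦ'.comp (he.comp (hΦ.mono fun x hx => ?_) fun x hx => ?_) fun x hx => ?_ <;>
    simp only [mfld_simps] at hx ⊢ <;> tauto

theorem OpenPartialHomeomorph.contDiffOn_prod_symm_trans_prod {X Y : Type*} [TopologicalSpace X]
    [TopologicalSpace Y] {n : WithTop ℕ∞} {e e' : OpenPartialHomeomorph X E}
    {f f' : OpenPartialHomeomorph Y F}
    (he : ContDiffOn 𝕜 n (e.symm ≫ₕ e') (e.symm ≫ₕ e').source)
    (hf : ContDiffOn 𝕜 n (f.symm ≫ₕ f') (f.symm ≫ₕ f').source) :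
    ContDiffOn 𝕜 n ((e.prod f).symm ≫ₕ e'.prod f') ((e.prod f).symm ≫ₕ e'.prod f').source := by
  rw [OpenPartialHomeomorph.prod_symm, OpenPartialHomeomorph.prod_trans]
  exact he.prodMap hf

variable {X Y : Type*} [TopologicalSpace X] [ChartedSpace E X] [TopologicalSpace Y]
  [ChartedSpace F Y]

theorem contDiffOn_chartAt_symm_trans_chartAt {n : WithTop ℕ∞} [IsManifold 𝓘(𝕜, E) n X]
    (x x' : X) :
    ContDiffOn 𝕜 n ((chartAt E x).symm ≫ₕ chartAt E x')
      ((chartAt E x).symm ≫ₕ chartAt E x').source := by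
  simpa using contDiffOn_ext_coord_change (I := 𝓘(𝕜, E)) x' x

theorem MDifferentiableAt.hasFDerivAt_chartAt_comp {f : X → Y} {x : X}
    (hf : MDifferentiableAt 𝓘(𝕜, E) 𝓘(𝕜, F) f x) :
    HasFDerivAt (chartAt F (f x) ∘ f ∘ (chartAt E x).symm) (mfderiv 𝓘(𝕜, E) 𝓘(𝕜, F) f x)
      (chartAt E x x) :=
  hasFDerivWithinAt_univ.1 (by simpa [writtenInExtChartAt] using hf.hasMFDerivAt.2)

theorem ContMDiff.contDiffOn_chartAt_comp {n : WithTop ℕ∞} [IsManifold 𝓘(𝕜, E) n X]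
    [IsManifold 𝓘(𝕜, F) n Y] {f : X → Y} (hf : ContMDiff 𝓘(𝕜, E) 𝓘(𝕜, F) n f) (x : X) (y : Y) :
    ContDiffOn 𝕜 n (chartAt F y ∘ f ∘ (chartAt E x).symm)
      ((chartAt E x).target ∩ (chartAt E x).symm ⁻¹' (f ⁻¹' (chartAt F y).source)) := by
  refine contMDiffOn_iff_contDiffOn.1 (contMDiffOn_chart.comp ?_ fun w hw => hw.2)
  exact hf.comp_contMDiffOn (contMDiffOn_chart_symm.mono inter_subset_left)

end Calculus

structure SliceAtlas (F G Y X : Type*) [Zero F] [TopologicalSpace F] [TopologicalSpace G]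
    [TopologicalSpace Y] [TopologicalSpace X] where
  embedding : Y → X
  isEmbedding : IsEmbedding embedding
  chart : Y → OpenPartialHomeomorph X (F × G)
  mem_chart_source (y : Y) : embedding y ∈ (chart y).source
  mem_range_iff (y : Y) {x : X} (hx : x ∈ (chart y).source) :
    x ∈ range embedding ↔ (chart y x).1 = 0

noncomputable section

namespace SliceAtlas

variable {F G Y X : Type*} [TopologicalSpace Y] [TopologicalSpace X]

section Topology

variable [Zero F] [TopologicalSpace F] [TopologicalSpace G] (A : SliceAtlas F G Y X)

lemma chart_embedding {y y' : Y} (hy' : A.embedding y' ∈ (A.chart y).source) :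
    A.chart y (A.embedding y') = (0, (A.chart y (A.embedding y')).2) :=
  Prod.ext ((A.mem_range_iff y hy').1 (mem_range_self y')) rfl

lemma chart_symm_mem_range {y : Y} {t : G} (ht : ((0 : F), t) ∈ (A.chart y).target) :
    (A.chart y).symm (0, t) ∈ range A.embedding :=
  (A.mem_range_iff y ((A.chart y).map_target ht)).2 (by rw [(A.chart y).right_inv ht])

lemma embedding_invFun_chart_symm [Nonempty Y] {y : Y} {t : G}
    (ht : ((0 : F), t) ∈ (A.chart y).target) :
    A.embedding (invFun A.embedding ((A.chart y).symm (0, t))) = (A.chart y).symm (0, t) :=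
  invFun_eq (A.chart_symm_mem_range ht)

def sliceChart (y : Y) : OpenPartialHomeomorph Y G :=
  haveI : Nonempty Y := ⟨y⟩
  { toFun y' := (A.chart y (A.embedding y')).2
    invFun t := invFun A.embedding ((A.chart y).symm (0, t))
    source := A.embedding ⁻¹' (A.chart y).source
    target := {t | ((0 : F), t) ∈ (A.chart y).target}
    map_source' y' hy' := by
      simpa only [mem_ofPred_eq, ← A.chart_embedding hy'] using (A.chart y).map_source hy'
    map_target' t ht := by
      simpa only [mem_preimage, A.embedding_invFun_chart_symm ht] using (A.chart y).map_target ht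
    left_inv' y' hy' := by
      rw [← A.chart_embedding hy', (A.chart y).left_inv hy',
        leftInverse_invFun A.isEmbedding.injective]
    right_inv' t ht := by
      rw [A.embedding_invFun_chart_symm ht, (A.chart y).right_inv ht]
    open_source := (A.chart y).open_source.preimage A.isEmbedding.continuous
    open_target := (A.chart y).open_target.preimage (by fun_prop)
    continuousOn_toFun :=
      continuous_snd.comp_continuousOn
        ((A.chart y).continuousOn.comp A.isEmbedding.continuous.continuousOn fun _ h => h)
    continuousOn_invFun := by
      rw [A.isEmbedding.isInducing.continuousOn_iff]
      exact ((A.chart y).continuousOn_symm.comp (Continuous.prodMk_right (0 : F)).continuousOn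
        fun _ h => h).congr fun t ht => A.embedding_invFun_chart_symm ht }

@[reducible] def chartedSpace : ChartedSpace G Y where
  atlas := range A.sliceChart
  chartAt := A.sliceChart
  mem_chart_source := A.mem_chart_source
  chart_mem_atlas := mem_range_self

lemma mem_chart_symm_trans_chart_source {y y' : Y} {t : G}
    (ht : t ∈ ((A.sliceChart y).symm ≫ₕ A.sliceChart y').source) :
    ((0 : F), t) ∈ ((A.chart y).symm ≫ₕ A.chart y').source := by
  have : Nonempty Y := ⟨y⟩
  simp only [sliceChart, mfld_simps] at ht ⊢
  rwa [A.embedding_invFun_chart_symm ht.1] at ht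

lemma sliceChart_symm_trans_sliceChart_eqOn (y y' : Y) :
    EqOn ((A.sliceChart y).symm ≫ₕ A.sliceChart y')
      (fun t => (((A.chart y).symm ≫ₕ A.chart y') (0, t)).2)
      ((A.sliceChart y).symm ≫ₕ A.sliceChart y').source := by
  have : Nonempty Y := ⟨y⟩
  intro t ht
  simp only [sliceChart, mfld_simps] at ht ⊢
  rw [A.embedding_invFun_chart_symm ht.1]

end Topology

theorem isManifold {𝕜 : Type*} [NontriviallyNormedField 𝕜] [NormedAddCommGroup F]
    [NormedSpace 𝕜 F] [NormedAddCommGroup G] [NormedSpace 𝕜 G] {n : WithTop ℕ∞}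
    (A : SliceAtlas F G Y X)
    (h : ∀ y y', ContDiffOn 𝕜 n ((A.chart y).symm ≫ₕ A.chart y')
      ((A.chart y).symm ≫ₕ A.chart y').source) :
    letI := A.chartedSpace; IsManifold 𝓘(𝕜, G) n Y := by
  let := A.chartedSpace
  refine isManifold_of_contDiffOn _ _ _ ?_
  rintro _ _ ⟨y, rfl⟩ ⟨y', rfl⟩
  simp only [modelWithCornersSelf_coe, modelWithCornersSelf_coe_symm, comp_id, id_comp,
    preimage_id, range_id, inter_univ]
  refine ContDiffOn.congr ?_ (A.sliceChart_symm_trans_sliceChart_eqOn y y')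
  exact contDiff_snd.comp_contDiffOn ((h y y').comp (contDiff_prodMk_right (0 : F)).contDiffOn
    fun t ht => A.mem_chart_symm_trans_chart_source ht)

end SliceAtlas

end

section Intersection

variable {𝕜 : Type*} [RCLike 𝕜] {E₁ E₂ E : Type*}
  [NormedAddCommGroup E₁] [NormedSpace 𝕜 E₁] [NormedAddCommGroup E₂] [NormedSpace 𝕜 E₂]
  [NormedAddCommGroup E] [NormedSpace 𝕜 E]
  {P₁ P₂ M : Type*} [TopologicalSpace P₁] [TopologicalSpace P₂] [TopologicalSpace M]

section ChartDifference

variable (σ₁ : P₁ → M) (σ₂ : P₂ → M) (e₁ : OpenPartialHomeomorph P₁ E₁)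
  (e₂ : OpenPartialHomeomorph P₂ E₂) (e : OpenPartialHomeomorph M E)

def chartDifference (w : E₁ × E₂) : E :=
  e (σ₁ (e₁.symm w.1)) - e (σ₂ (e₂.symm w.2))

def chartDifferenceDomain : Set (E₁ × E₂) :=
  (e₁.target ∩ e₁.symm ⁻¹' (σ₁ ⁻¹' e.source)) ×ˢ (e₂.target ∩ e₂.symm ⁻¹' (σ₂ ⁻¹' e.source))

variable {σ₁ σ₂ e₁ e₂ e}

lemma isOpen_chartDifferenceDomain (hσ₁ : Continuous σ₁) (hσ₂ : Continuous σ₂) :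
    IsOpen (chartDifferenceDomain σ₁ σ₂ e₁ e₂ e) :=
  (e₁.isOpen_inter_preimage_symm (e.open_source.preimage hσ₁)).prod
    (e₂.isOpen_inter_preimage_symm (e.open_source.preimage hσ₂))

lemma mem_chartDifferenceDomain {p : P₁ × P₂} (hp₁ : p.1 ∈ e₁.source) (hp₂ : p.2 ∈ e₂.source)
    (hσp₁ : σ₁ p.1 ∈ e.source) (hσp₂ : σ₂ p.2 ∈ e.source) :
    (e₁ p.1, e₂ p.2) ∈ chartDifferenceDomain σ₁ σ₂ e₁ e₂ e :=
  ⟨⟨e₁.map_source hp₁, by simpa [e₁.left_inv hp₁]⟩, ⟨e₂.map_source hp₂, by simpa [e₂.left_inv hp₂]⟩⟩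

lemma chartDifference_eq_zero_iff {p : P₁ × P₂} (hp₁ : p.1 ∈ e₁.source) (hp₂ : p.2 ∈ e₂.source)
    (hp : (e₁ p.1, e₂ p.2) ∈ chartDifferenceDomain σ₁ σ₂ e₁ e₂ e) :
    chartDifference σ₁ σ₂ e₁ e₂ e (e₁ p.1, e₂ p.2) = 0 ↔ σ₁ p.1 = σ₂ p.2 := by
  obtain ⟨⟨-, hσp₁⟩, ⟨-, hσp₂⟩⟩ := hp
  simp only [mem_preimage, e₁.left_inv hp₁, e₂.left_inv hp₂] at hσp₁ hσp₂
  rw [chartDifference, e₁.left_inv hp₁, e₂.left_inv hp₂, sub_eq_zero]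
  exact e.injOn.eq_iff hσp₁ hσp₂

variable [ChartedSpace E₁ P₁] [ChartedSpace E₂ P₂] [ChartedSpace E M] {x₁ : P₁} {x₂ : P₂} {y : M}

lemma contDiffOn_chartDifference {n : WithTop ℕ∞} [IsManifold 𝓘(𝕜, E₁) n P₁]
    [IsManifold 𝓘(𝕜, E₂) n P₂] [IsManifold 𝓘(𝕜, E) n M]
    (hσ₁ : ContMDiff 𝓘(𝕜, E₁) 𝓘(𝕜, E) n σ₁) (hσ₂ : ContMDiff 𝓘(𝕜, E₂) 𝓘(𝕜, E) n σ₂) :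
    ContDiffOn 𝕜 n (chartDifference σ₁ σ₂ (chartAt E₁ x₁) (chartAt E₂ x₂) (chartAt E y))
      (chartDifferenceDomain σ₁ σ₂ (chartAt E₁ x₁) (chartAt E₂ x₂) (chartAt E y)) :=
  ((hσ₁.contDiffOn_chartAt_comp x₁ y).comp contDiffOn_fst fun _ hw => hw.1).sub
    ((hσ₂.contDiffOn_chartAt_comp x₂ y).comp contDiffOn_snd fun _ hw => hw.2)

lemma exists_hasFDerivAt_chartDifference_surjective (h₁ : σ₁ x₁ = y) (h₂ : σ₂ x₂ = y)
    (hd₁ : MDifferentiableAt 𝓘(𝕜, E₁) 𝓘(𝕜, E) σ₁ x₁)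
    (hd₂ : MDifferentiableAt 𝓘(𝕜, E₂) 𝓘(𝕜, E) σ₂ x₂)
    (htrans : Surjective
      ((mfderiv 𝓘(𝕜, E₁) 𝓘(𝕜, E) σ₁ x₁).coprod (mfderiv 𝓘(𝕜, E₂) 𝓘(𝕜, E) σ₂ x₂))) :
    ∃ L : E₁ × E₂ →L[𝕜] E,
      HasFDerivAt (chartDifference σ₁ σ₂ (chartAt E₁ x₁) (chartAt E₂ x₂) (chartAt E y)) L
        (chartAt E₁ x₁ x₁, chartAt E₂ x₂ x₂) ∧ Surjective L := by
  have hf₁ := hd₁.hasFDerivAt_chartAt_comp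
  have hf₂ := hd₂.hasFDerivAt_chartAt_comp
  rw [h₁] at hf₁
  rw [h₂] at hf₂
  exact ⟨_, hf₁.sub_prod hf₂, htrans.coprod_neg⟩

end ChartDifference

noncomputable section IntersectionLift

variable {σ₁ : P₁ → M} {σ₂ : P₂ → M}

def intersectionLift (hemb₁ : IsEmbedding σ₁) (hemb₂ : IsEmbedding σ₂)
    (s : ↥(range σ₁ ∩ range σ₂)) : P₁ × P₂ :=
  (hemb₁.toHomeomorph.symm ⟨s, s.2.1⟩, hemb₂.toHomeomorph.symm ⟨s, s.2.2⟩)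

variable (hemb₁ : IsEmbedding σ₁) (hemb₂ : IsEmbedding σ₂)

lemma apply_intersectionLift_fst (s : ↥(range σ₁ ∩ range σ₂)) :
    σ₁ (intersectionLift hemb₁ hemb₂ s).1 = s :=
  congrArg Subtype.val (hemb₁.toHomeomorph.apply_symm_apply ⟨s, s.2.1⟩)

lemma apply_intersectionLift_snd (s : ↥(range σ₁ ∩ range σ₂)) :
    σ₂ (intersectionLift hemb₁ hemb₂ s).2 = s :=
  congrArg Subtype.val (hemb₂.toHomeomorph.apply_symm_apply ⟨s, s.2.2⟩)

lemma isEmbedding_intersectionLift : IsEmbedding (intersectionLift hemb₁ hemb₂) := by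
  have hcont : Continuous (intersectionLift hemb₁ hemb₂) := by
    unfold intersectionLift; fun_prop
  refine .of_comp hcont (hemb₁.continuous.comp continuous_fst) ?_
  convert IsEmbedding.subtypeVal using 1
  exact funext (apply_intersectionLift_fst hemb₁ hemb₂)

lemma mem_range_intersectionLift_iff {p : P₁ × P₂} :
    p ∈ range (intersectionLift hemb₁ hemb₂) ↔ σ₁ p.1 = σ₂ p.2 := by
  refine ⟨?_, fun h => ⟨⟨σ₁ p.1, mem_range_self _, h ▸ mem_range_self _⟩, ?_⟩⟩
  · rintro ⟨s, rfl⟩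
    rw [apply_intersectionLift_fst hemb₁ hemb₂ s, apply_intersectionLift_snd hemb₁ hemb₂ s]
  · exact Prod.ext (hemb₁.injective (apply_intersectionLift_fst ..))
      (hemb₂.injective ((apply_intersectionLift_snd ..).trans h))

end IntersectionLift

section Transverse

variable [ChartedSpace E₁ P₁] [ChartedSpace E₂ P₂] [ChartedSpace E M] {G : Type*}
  [NormedAddCommGroup G] [NormedSpace 𝕜 G] [FiniteDimensional 𝕜 E₁] [FiniteDimensional 𝕜 E₂]
  [FiniteDimensional 𝕜 G] {n : WithTop ℕ∞} [IsManifold 𝓘(𝕜, E₁) n P₁]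
  [IsManifold 𝓘(𝕜, E₂) n P₂] [IsManifold 𝓘(𝕜, E) n M] {σ₁ : P₁ → M} {σ₂ : P₂ → M}

theorem exists_openPartialHomeomorph_fst_eq_chartDifference (hn : 1 ≤ n)
    (hσ₁ : ContMDiff 𝓘(𝕜, E₁) 𝓘(𝕜, E) n σ₁) (hσ₂ : ContMDiff 𝓘(𝕜, E₂) 𝓘(𝕜, E) n σ₂)
    {x₁ : P₁} {x₂ : P₂} {y : M} (h₁ : σ₁ x₁ = y) (h₂ : σ₂ x₂ = y)
    (htrans : Surjective
      ((mfderiv 𝓘(𝕜, E₁) 𝓘(𝕜, E) σ₁ x₁).coprod (mfderiv 𝓘(𝕜, E₂) 𝓘(𝕜, E) σ₂ x₂)))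
    (hdim : finrank 𝕜 E₁ + finrank 𝕜 E₂ = finrank 𝕜 E + finrank 𝕜 G) :
    ∃ Φ : OpenPartialHomeomorph (E₁ × E₂) (E × G),
      (chartAt E₁ x₁ x₁, chartAt E₂ x₂ x₂) ∈ Φ.source ∧
      Φ.source ⊆ chartDifferenceDomain σ₁ σ₂ (chartAt E₁ x₁) (chartAt E₂ x₂) (chartAt E y) ∧
      (∀ w, (Φ w).1 = chartDifference σ₁ σ₂ (chartAt E₁ x₁) (chartAt E₂ x₂) (chartAt E y) w) ∧
      ContDiffOn 𝕜 n Φ Φ.source ∧ ContDiffOn 𝕜 n Φ.symm Φ.target := by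
  have hn0 : n ≠ 0 := (zero_lt_one.trans_le hn).ne'
  obtain ⟨L, hL, hLsurj⟩ := exists_hasFDerivAt_chartDifference_surjective h₁ h₂
    (hσ₁.mdifferentiableAt hn0) (hσ₂.mdifferentiableAt hn0) htrans
  refine (contDiffOn_chartDifference hσ₁ hσ₂).exists_openPartialHomeomorph_fst_eq
    (isOpen_chartDifferenceDomain hσ₁.continuous hσ₂.continuous) hn
    (mem_chartDifferenceDomain (p := (x₁, x₂)) (mem_chart_source E₁ x₁) (mem_chart_source E₂ x₂)
      (h₁ ▸ mem_chart_source E y) (h₂ ▸ mem_chart_source E y)) hL hLsurj ?_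
  rw [finrank_prod, hdim]

theorem exists_isManifold_range_inter_range (hn : 1 ≤ n)
    (hσ₁ : ContMDiff 𝓘(𝕜, E₁) 𝓘(𝕜, E) n σ₁) (hσ₂ : ContMDiff 𝓘(𝕜, E₂) 𝓘(𝕜, E) n σ₂)
    (hemb₁ : IsEmbedding σ₁) (hemb₂ : IsEmbedding σ₂)
    (htrans : ∀ x₁ x₂, σ₁ x₁ = σ₂ x₂ → Surjective
      ((mfderiv 𝓘(𝕜, E₁) 𝓘(𝕜, E) σ₁ x₁).coprod (mfderiv 𝓘(𝕜, E₂) 𝓘(𝕜, E) σ₂ x₂)))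
    (hdim : finrank 𝕜 E₁ + finrank 𝕜 E₂ = finrank 𝕜 E + finrank 𝕜 G) :
    ∃ _ : ChartedSpace G ↥(range σ₁ ∩ range σ₂), IsManifold 𝓘(𝕜, G) n ↥(range σ₁ ∩ range σ₂) := by
  set ι := intersectionLift hemb₁ hemb₂
  have hι₁ := apply_intersectionLift_fst hemb₁ hemb₂
  have hι₂ := apply_intersectionLift_snd hemb₁ hemb₂
  choose Φ hmem hsub hfst hΦ hΦsymm using fun s : ↥(range σ₁ ∩ range σ₂) =>
    exists_openPartialHomeomorph_fst_eq_chartDifference hn hσ₁ hσ₂ (hι₁ s) (hι₂ s)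
      (htrans _ _ ((hι₁ s).trans (hι₂ s).symm)) hdim
  let A : SliceAtlas E G ↥(range σ₁ ∩ range σ₂) (P₁ × P₂) :=
    { embedding := ι
      isEmbedding := isEmbedding_intersectionLift hemb₁ hemb₂
      chart s := ((chartAt E₁ (ι s).1).prod (chartAt E₂ (ι s).2)) ≫ₕ Φ s
      mem_chart_source s := ⟨⟨mem_chart_source _ _, mem_chart_source _ _⟩, hmem s⟩
      mem_range_iff s p hp := by
        obtain ⟨⟨hp₁, hp₂⟩, hpΦ⟩ := hp
        rw [mem_range_intersectionLift_iff, OpenPartialHomeomorph.trans_apply,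
          OpenPartialHomeomorph.prod_apply, hfst,
          chartDifference_eq_zero_iff hp₁ hp₂ (hsub s hpΦ)] }
  refine ⟨A.chartedSpace, A.isManifold fun s s' => ?_⟩
  exact OpenPartialHomeomorph.contDiffOn_trans_symm_trans_trans
    (OpenPartialHomeomorph.contDiffOn_prod_symm_trans_prod
      (contDiffOn_chartAt_symm_trans_chartAt _ _) (contDiffOn_chartAt_symm_trans_chartAt _ _))
    (hΦsymm s) (hΦ s')

end Transverse

end Intersection

theorem unstable_stable_intersection_submanifold_general
    {m b indB indB' : ℕ} (hb' : indB' ≤ m) (hle : indB' ≤ indB)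
    {M : Type*} [TopologicalSpace M]
    [ChartedSpace (EuclideanSpace ℝ (Fin m)) M]
    [IsManifold (𝓡 m) (⊤ : ℕ∞) M]
    -- the unstable manifold `W^u(B)`, of dimension `b + ind B`
    {P1 : Type*} [TopologicalSpace P1]
    [ChartedSpace (EuclideanSpace ℝ (Fin (b + indB))) P1]
    [IsManifold (𝓡 (b + indB)) (⊤ : ℕ∞) P1]
    -- the stable manifold `W^s(B')`, of dimension `m - ind B'`
    {P2 : Type*} [TopologicalSpace P2]
    [ChartedSpace (EuclideanSpace ℝ (Fin (m - indB'))) P2]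
    [IsManifold (𝓡 (m - indB')) (⊤ : ℕ∞) P2]
    (σ1 : P1 → M) (σ2 : P2 → M)
    (hσ1 : ContMDiff (𝓡 (b + indB)) (𝓡 m) (⊤ : ℕ∞) σ1)
    (hσ2 : ContMDiff (𝓡 (m - indB')) (𝓡 m) (⊤ : ℕ∞) σ2)
    (hemb1 : Topology.IsEmbedding σ1) (hemb2 : Topology.IsEmbedding σ2)
    -- Morse--Bott--Smale transversality
    (htrans : ∀ (x1 : P1) (x2 : P2), σ1 x1 = σ2 x2 →
      ∀ v : EuclideanSpace ℝ (Fin m),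
        ∃ (u1 : TangentSpace (𝓡 (b + indB)) x1)
          (u2 : TangentSpace (𝓡 (m - indB')) x2),
          v = tangentToE (mfderiv (𝓡 (b + indB)) (𝓡 m) σ1 x1 u1) +
              tangentToE (mfderiv (𝓡 (m - indB')) (𝓡 m) σ2 x2 u2)) :
    ∃ _cs : ChartedSpace (EuclideanSpace ℝ (Fin (indB - indB' + b)))
        ↥(Set.range σ1 ∩ Set.range σ2),
      @IsManifold ℝ _
        (EuclideanSpace ℝ (Fin (indB - indB' + b))) _ _
        (EuclideanSpace ℝ (Fin (indB - indB' + b))) _ (𝓡 (indB - indB' + b)) (⊤ : ℕ∞)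
        ↥(Set.range σ1 ∩ Set.range σ2) _ _cs := by
  refine exists_isManifold_range_inter_range (by exact_mod_cast le_top) hσ1 hσ2 hemb1 hemb2
    (fun x1 x2 h v => ?_) ?_
  · obtain ⟨u1, u2, hv⟩ := htrans x1 x2 h v
    exact ⟨(u1, u2), hv.symm⟩
  · simp only [finrank_euclideanSpace_fin]
    omega

theorem unstable_stable_intersection_submanifold
    {m b indB indB' : ℕ} (hb' : indB' ≤ m) (hle : indB' ≤ indB)
    {M : Type*} [TopologicalSpace M]
    [ChartedSpace (EuclideanSpace ℝ (Fin m)) M]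
    [IsManifold (𝓡 m) (⊤ : ℕ∞) M]
    -- the unstable manifold `W^u(B)`, of dimension `b + ind B`
    {P1 : Type*} [TopologicalSpace P1]
    [ChartedSpace (EuclideanSpace ℝ (Fin (b + indB))) P1]
    [IsManifold (𝓡 (b + indB)) (⊤ : ℕ∞) P1]
    -- the stable manifold `W^s(B')`, of dimension `m - ind B'`
    {P2 : Type*} [TopologicalSpace P2]
    [ChartedSpace (EuclideanSpace ℝ (Fin (m - indB'))) P2]
    [IsManifold (𝓡 (m - indB')) (⊤ : ℕ∞) P2]
    (σ1 : P1 → M) (σ2 : P2 → M)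
    (hσ1 : ContMDiff (𝓡 (b + indB)) (𝓡 m) (⊤ : ℕ∞) σ1)
    (hσ2 : ContMDiff (𝓡 (m - indB')) (𝓡 m) (⊤ : ℕ∞) σ2)
    (hinj1 : Function.Injective σ1) (hinj2 : Function.Injective σ2)
    (hemb1 : Topology.IsEmbedding σ1) (hemb2 : Topology.IsEmbedding σ2)
    -- Morse--Bott--Smale transversality
    (htrans : ∀ (x1 : P1) (x2 : P2), σ1 x1 = σ2 x2 →
      ∀ v : EuclideanSpace ℝ (Fin m),
        ∃ (u1 : TangentSpace (𝓡 (b + indB)) x1)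
          (u2 : TangentSpace (𝓡 (m - indB')) x2),
          v = tangentToE (mfderiv (𝓡 (b + indB)) (𝓡 m) σ1 x1 u1) +
              tangentToE (mfderiv (𝓡 (m - indB')) (𝓡 m) σ2 x2 u2))
    -- `W(B, B') = W^u(B) ∩ W^s(B')` is nonempty
    (hne : (Set.range σ1 ∩ Set.range σ2).Nonempty) :
    ∃ _cs : ChartedSpace (EuclideanSpace ℝ (Fin (indB - indB' + b)))
        ↥(Set.range σ1 ∩ Set.range σ2),
      @IsManifold ℝ _
        (EuclideanSpace ℝ (Fin (indB - indB' + b))) _ _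
        (EuclideanSpace ℝ (Fin (indB - indB' + b))) _ (𝓡 (indB - indB' + b)) (⊤ : ℕ∞)
        ↥(Set.range σ1 ∩ Set.range σ2) _ _cs :=
  unstable_stable_intersection_submanifold_general hb' hle σ1 σ2 hσ1 hσ2 hemb1 hemb2 htrans
end

section
/- Under the hypotheses of the previous setup (maps $\partial_{[j]}$ with $\sum_{q=0}^j \partial_{[q]}\partial_{[j-q]} = 0$, and $\partial_{[0]}$ an isomorphism in positive even degrees and zero otherwise), for every $c_0 \in \mathcal{C}_0(B_k)$ there exists a unique tuple $(c_1, \dots, c_k) \in \mathcal{C}_1(B_{k-1}) \oplus \cdots \oplus \mathcal{C}_k(B_0)$ such that: (1) $c_i = 0$ for $i$ odd; (2) writing $(d_0, \dots, d_{k-1}) = \boldsymbol{\partial}_k(c_0, \dots, c_k)$, one has $d_i = 0$ for $i$ odd and $d_i = -\partial_{[0]}^{-1}(\partial_{[i]}(d_0) + \partial_{[i-2]}(d_2) + \cdots + \partial_{[2]}(d_{i-2}))$ for $i$ positive even. -/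
/-!
STATEMENT 15 (canonical embedding lemma): With maps
`∂_{[j]} : C p i →+ C (p+j-1) (i-j)` satisfying
`∑_{q=0}^j ∂_{[q]} ∘ ∂_{[j-q]} = 0`, and `∂_{[0]}` an isomorphism in positive
even degrees and zero otherwise, for every `c₀ ∈ 𝒞_0(B_k)` there is a unique
tuple `(c₁, …, c_k) ∈ 𝒞_1(B_{k-1}) ⊕ ⋯ ⊕ 𝒞_k(B_0)` such that
(1) `c_i = 0` for `i` odd, and
(2) writing `(d_0, …, d_{k-1}) = 𝛛_k(c₀, …, c_k)` (so
`d_i = ∑_{j=0}^{i+1} ∂_{[j]}(c_{i+1-j})`), one has `d_i = 0` for `i` odd and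
`∂_{[0]}(d_i) = -(∂_{[i]}(d_0) + ∂_{[i-2]}(d_2) + ⋯ + ∂_{[2]}(d_{i-2}))`
(the formula `d_i = -∂_{[0]}^{-1}(⋯)`) for `i` positive even.
The tuple is encoded as a function `c : ℤ → 𝒞_i(B_{k-i})` with `c 0 = c₀` and
`c i = 0` outside `0 ≤ i ≤ k`.
-/

/-- Transport along equalities of the two degrees. -/
def castC {C : ℤ → ℤ → Type u} [∀ p i, AddCommGroup (C p i)] {a a' b b' : ℤ}
    (h1 : a = a') (h2 : b = b') : C a b ≃+ C a' b' := by
  subst h1; subst h2; exact AddEquiv.refl _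

/-!
For `i` positive even, the vanishing of the odd component `d_{i-1}` says exactly that
`∂_{[0]} c_i = -∑_{0<j≤i} ∂_{[j]} c_{i-j}`. As `∂_{[0]}` is bijective in positive even degrees,
this determines `c_i` from `c_0, …, c_{i-1}`, so the tuple exists and is unique by well-founded
recursion. The formula for the even components is then forced: the relation
`∑ ∂_{[q]} ∂_{[j-q]} = 0` gives `∑_{0≤j≤i+1} ∂_{[j]} d_{i-j} = 0` (that is, `𝛛_{k-1} ∘ 𝛛_k = 0`,
with `d_{-1} = ∂_{[0]} c_0`), and in this sum the terms with `d_q`, `q` odd, vanish, as does the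
one with `d_{-1}`, since `∂_{[0]}` is zero in degree `0`.
-/

universe u

open Finset

theorem Finset.sum_Icc_sum_Icc_eq_sum_Icc_sum_Icc_sub {M : Type*} [AddCommMonoid M] (n : ℤ)
    (f : ℤ → ℤ → M) :
    ∑ j ∈ Icc 0 (n + 1), ∑ l ∈ Icc 0 (n - j + 1), f j l
      = ∑ s ∈ Icc 0 (n + 1), ∑ q ∈ Icc 0 s, f q (s - q) := by
  rw [sum_sigma', sum_sigma']
  refine sum_nbij' (fun x => ⟨x.1 + x.2, x.1⟩) (fun x => ⟨x.2, x.1 - x.2⟩) ?_ ?_ ?_ ?_ ?_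
  · rintro ⟨j, l⟩ h
    simp only [mem_sigma, mem_Icc] at h ⊢
    omega
  · rintro ⟨s, q⟩ h
    simp only [mem_sigma, mem_Icc] at h ⊢
    omega
  · rintro ⟨j, l⟩ -
    simp
  · rintro ⟨s, q⟩ -
    simp
  · rintro ⟨j, l⟩ -
    simp

theorem WellFounded.existsUnique_fix {α : Sort*} {r : α → α → Prop} (hr : WellFounded r)
    {X : α → Sort*} (P : ∀ a, (∀ b, r b a → X b) → X a → Prop) (h : ∀ a f, ∃! x, P a f x) :
    ∃! c : ∀ a, X a, ∀ a, P a (fun b _ => c b) (c a) := by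
  set c := hr.fix fun a f => (h a f).exists.choose with hc
  have hspec : ∀ a, P a (fun b _ => c b) (c a) := fun a => by
    rw [hc, hr.fix_eq]
    exact (h a _).exists.choose_spec
  refine ⟨c, hspec, fun c' hc' => funext fun a => ?_⟩
  induction a using hr.induction with
  | _ a ih =>
    have hlow : (fun b (_ : r b a) => c' b) = fun b _ => c b := funext₂ ih
    exact (h a _).unique (hlow ▸ hc' a) (hspec a)

section

variable {C : ℤ → ℤ → Type u} [∀ p i, AddCommGroup (C p i)]

theorem castC_heq {a a' b b' : ℤ} (h1 : a = a') (h2 : b = b') (x : C a b) :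
    castC (C := C) h1 h2 x ≍ x := by
  subst h1 h2; rfl

theorem castC_eq_castC_of_heq {a a' b b' A B : ℤ} (h1 : a = A) (h2 : b = B) (h1' : a' = A)
    (h2' : b' = B) {x : C a b} {x' : C a' b'} (h : x ≍ x') :
    castC (C := C) h1 h2 x = castC (C := C) h1' h2' x' :=
  eq_of_heq ((castC_heq h1 h2 x).trans (h.trans (castC_heq h1' h2' x').symm))

@[simp]
theorem castC_castC {a a' a'' b b' b'' : ℤ} (h1 : a = a') (h2 : b = b') (h1' : a' = a'')
    (h2' : b' = b'') (x : C a b) :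
    castC (C := C) h1' h2' (castC (C := C) h1 h2 x) =
      castC (C := C) (h1.trans h1') (h2.trans h2') x := by
  subst h1 h2 h1' h2'; rfl

variable (d : ∀ j p i : ℤ, C p i →+ C (p + j - 1) (i - j))

theorem heq_apply_of_heq {j j' p p' i i' : ℤ} (hj : j = j') (hp : p = p') (hi : i = i')
    {x : C p i} {x' : C p' i'} (hx : x ≍ x') : d j p i x ≍ d j' p' i' x' := by
  subst hj hp hi; rw [eq_of_heq hx]

variable (k : ℤ)

-- The components `d_q` of `𝛛_k(c_0, …, c_k)`.
noncomputable def totalBoundary (c : ∀ i : ℤ, C i (k - i)) (q : ℤ) : C q (k - 1 - q) :=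
  ∑ j ∈ Icc (0 : ℤ) (q + 1),
    castC (C := C) (by ring) (by ring) (d j (q + 1 - j) (k - (q + 1 - j)) (c (q + 1 - j)))

theorem sum_d_totalBoundary_eq_zero
    (hrel : ∀ (j p i : ℤ) (x : C p i),
      ∑ q ∈ Icc (0 : ℤ) j,
        castC (C := C) (by ring) (by ring)
          (d q (p + (j - q) - 1) (i - (j - q)) (d (j - q) p i x)) =
        (0 : C (p + j - 2) (i - j)))
    (c : ∀ i : ℤ, C i (k - i)) (n : ℤ) :
    ∑ j ∈ Icc (0 : ℤ) (n + 1),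
      castC (C := C) (by ring) (by ring)
        (d j (n - j) (k - 1 - (n - j)) (totalBoundary d k c (n - j)))
      = (0 : C (n - 1) (k - 1 - n)) := by
  simp only [totalBoundary, map_sum]
  rw [sum_Icc_sum_Icc_eq_sum_Icc_sum_Icc_sub]
  refine sum_eq_zero fun s _ => ?_
  rw [← map_zero (castC (C := C) (by ring : n + 1 - s + s - 2 = n - 1)
    (by ring : k - (n + 1 - s) - s = k - 1 - n)), ← hrel s _ _ (c (n + 1 - s)), map_sum]
  refine sum_congr rfl fun q _ => ?_
  rw [castC_castC]
  refine castC_eq_castC_of_heq _ _ _ _ (heq_apply_of_heq d rfl (by ring) (by ring) ?_)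
  exact (castC_heq _ _ _).trans
    (heq_apply_of_heq d rfl (by ring) (by ring) (congr_arg_heq c (by ring)))

theorem totalBoundary_of_neg (hzero : ∀ i, d 0 0 i = 0) (c : ∀ i : ℤ, C i (k - i)) {q : ℤ}
    (hq : q < 0) : totalBoundary d k c q = 0 := by
  refine sum_eq_zero fun j hj => ?_
  rw [mem_Icc] at hj
  obtain rfl : j = 0 := by omega
  have hp : q + 1 - 0 = 0 := by omega
  calc _ = castC (C := C) (by omega) (by omega)
          (d 0 0 (k - (q + 1 - 0)) (castC (C := C) hp rfl (c (q + 1 - 0)))) :=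
        castC_eq_castC_of_heq _ _ _ _ (heq_apply_of_heq d rfl hp rfl (castC_heq _ _ _).symm)
    _ = 0 := by rw [hzero, AddMonoidHom.zero_apply, map_zero]

theorem totalBoundary_eq_zero_iff (c : ∀ i : ℤ, C i (k - i)) {n : ℤ} (hn : 0 ≤ n + 1) :
    totalBoundary d k c n = 0 ↔
      d 0 (n + 1) (k - (n + 1)) (c (n + 1)) = -∑ j ∈ Ioc (0 : ℤ) (n + 1),
        castC (C := C) (by ring) (by ring) (d j (n + 1 - j) (k - (n + 1 - j)) (c (n + 1 - j))) := by
  have hsplit : totalBoundary d k c n = castC (C := C) (by ring : n + 1 + 0 - 1 = n)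
      (by ring : k - (n + 1) - 0 = k - 1 - n) (d 0 (n + 1) (k - (n + 1)) (c (n + 1)) +
        ∑ j ∈ Ioc (0 : ℤ) (n + 1), castC (C := C) (by ring) (by ring)
          (d j (n + 1 - j) (k - (n + 1 - j)) (c (n + 1 - j)))) := by
    rw [totalBoundary, Icc_eq_cons_Ioc hn, sum_cons, map_add, map_sum]
    simp only [castC_castC]
    congr 1
    exact castC_eq_castC_of_heq _ _ _ _
      (heq_apply_of_heq d rfl (sub_zero _) (by rw [sub_zero]) (congr_arg_heq c (sub_zero _)))
  rw [hsplit, AddEquiv.map_eq_zero_iff, eq_neg_iff_add_eq_zero]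

theorem sum_filter_even_eq_sum_Ioc (K : ℤ) (e : ∀ q : ℤ, C q (K - q)) {i : ℤ} (hi : Even i)
    (hneg : ∀ q < 0, e q = 0) (hodd : ∀ q, 0 ≤ q → q < i → Odd q → e q = 0) :
    ∑ q ∈ (Icc (0 : ℤ) (i - 2)).filter (fun q => Even q),
        castC (C := C) (by ring) (by ring) (d (i - q) q (K - q) (e q))
      = (∑ j ∈ Ioc (0 : ℤ) (i + 1), castC (C := C) (by ring) (by ring)
          (d j (i - j) (K - (i - j)) (e (i - j))) : C (i - 1) (K - i)) := by
  calc _ = ∑ q ∈ Ico (-1 : ℤ) i,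
          castC (C := C) (by ring) (by ring) (d (i - q) q (K - q) (e q)) := by
        refine sum_subset (fun q hq => ?_) fun q hq hnot => ?_
        · simp only [mem_filter, mem_Icc, mem_Ico] at hq ⊢
          omega
        suffices e q = 0 by rw [this, map_zero, map_zero]
        rcases lt_or_ge q 0 with hq0 | hq0
        · exact hneg q hq0
        refine hodd q hq0 (mem_Ico.1 hq).2 (Int.not_even_iff_odd.1 fun heven => hnot ?_)
        have hqi := (mem_Ico.1 hq).2
        obtain ⟨a, rfl⟩ := heven
        obtain ⟨b, rfl⟩ := hi
        exact mem_filter.2 ⟨mem_Icc.2 ⟨hq0, by omega⟩, ⟨a, rfl⟩⟩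
    _ = _ := by
      refine sum_nbij' (fun q => i - q) (fun j => i - j) ?_ ?_ ?_ ?_ ?_
      · intro q hq
        simp only [mem_Ico, mem_Ioc] at hq ⊢
        omega
      · intro j hj
        simp only [mem_Ico, mem_Ioc] at hj ⊢
        omega
      · intro q _
        simp
      · intro j _
        simp
      · intro q _
        exact castC_eq_castC_of_heq _ _ _ _
          (heq_apply_of_heq d rfl (by ring) (by ring) (congr_arg_heq e (by ring)))

theorem d_zero_totalBoundary_eq_neg_sum
    (hrel : ∀ (j p i : ℤ) (x : C p i),
      ∑ q ∈ Icc (0 : ℤ) j,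
        castC (C := C) (by ring) (by ring)
          (d q (p + (j - q) - 1) (i - (j - q)) (d (j - q) p i x)) =
        (0 : C (p + j - 2) (i - j)))
    (hzero : ∀ i, d 0 0 i = 0) (c : ∀ i : ℤ, C i (k - i))
    (hodd : ∀ q, 0 ≤ q → q ≤ k - 1 → Odd q → totalBoundary d k c q = 0)
    {i : ℤ} (hi0 : 0 < i) (hik : i ≤ k - 1) (hi : Even i) :
    d 0 i (k - 1 - i) (totalBoundary d k c i) =
      -∑ q ∈ (Icc (0 : ℤ) (i - 2)).filter (fun q => Even q),
      castC (C := C) (by ring) (by ring) (d (i - q) q (k - 1 - q) (totalBoundary d k c q)) := by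
  have hdd := sum_d_totalBoundary_eq_zero d k hrel c i
  rw [Icc_eq_cons_Ioc (by omega), sum_cons,
    ← sum_filter_even_eq_sum_Ioc d (k - 1) (totalBoundary d k c) hi
      (fun _ hq => totalBoundary_of_neg d k hzero c hq)
      (fun q h0 hq => hodd q h0 (by omega))] at hdd
  apply (castC (C := C) (by ring : i + 0 - 1 = i - 1)
    (by ring : k - 1 - i - 0 = k - 1 - i)).injective
  rw [map_neg, map_sum, eq_neg_iff_add_eq_zero, ← hdd]
  simp only [castC_castC]
  congr 1
  exact castC_eq_castC_of_heq _ _ _ _ (heq_apply_of_heq d rfl (sub_zero i).symm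
    (by rw [sub_zero]) (congr_arg_heq (totalBoundary d k c) (sub_zero i).symm))

-- The condition on `c i` given the components `f` of lower index: for `i` positive even it is
-- `totalBoundary d k c (i - 1) = 0` solved for `c i`.
noncomputable def IsCanonicalStep (c0 : C 0 k) (i : ℤ)
    (f : ∀ b : ℤ, b.toNat < i.toNat → C b (k - b)) (x : C i (k - i)) : Prop :=
  if hi : 0 < i ∧ i ≤ k ∧ Even i then
    d 0 i (k - i) x = -∑ j ∈ (Ioc (0 : ℤ) i).attach, castC (C := C) (by ring) (by ring)
      (d j (i - j) (k - (i - j)) (f (i - j) (by have := mem_Ioc.1 j.2; omega)))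
  else if h0 : i = 0 then x = castC (C := C) h0.symm (by rw [h0, sub_zero]) c0
  else x = 0

variable (c0 : C 0 k)

theorem existsUnique_isCanonicalStep
    (hbij : ∀ p i, 0 < p ∧ Even p → Function.Bijective (d 0 p i)) (i : ℤ)
    (f : ∀ b : ℤ, b.toNat < i.toNat → C b (k - b)) : ∃! x, IsCanonicalStep d k c0 i f x := by
  unfold IsCanonicalStep
  split_ifs with hi
  · exact (hbij i (k - i) ⟨hi.1, hi.2.2⟩).existsUnique _
  · exact existsUnique_eq
  · exact existsUnique_eq

theorem isCanonicalStep_iff_of_pos (c : ∀ i : ℤ, C i (k - i)) {i : ℤ}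
    (hi : 0 < i ∧ i ≤ k ∧ Even i) :
    IsCanonicalStep d k c0 i (fun b _ => c b) (c i) ↔
      d 0 i (k - i) (c i) = -∑ j ∈ Ioc (0 : ℤ) i,
        castC (C := C) (by ring) (by ring) (d j (i - j) (k - (i - j)) (c (i - j))) := by
  rw [IsCanonicalStep, dif_pos hi, sum_attach (Ioc 0 i) fun j => castC (C := C) (by ring)
    (by ring : k - (i - j) - j = k - i - 0) (d j (i - j) (k - (i - j)) (c (i - j)))]

theorem isCanonicalStep_zero_iff (f : ∀ b : ℤ, b.toNat < (0 : ℤ).toNat → C b (k - b))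
    (x : C 0 (k - 0)) :
    IsCanonicalStep d k c0 0 f x ↔ x = castC (C := C) rfl (by ring) c0 := by
  rw [IsCanonicalStep, dif_neg (by simp), dif_pos rfl]

theorem isCanonicalStep_iff_eq_zero {i : ℤ} (hi : ¬(0 < i ∧ i ≤ k ∧ Even i)) (hi0 : i ≠ 0)
    (f : ∀ b : ℤ, b.toNat < i.toNat → C b (k - b)) (x : C i (k - i)) :
    IsCanonicalStep d k c0 i f x ↔ x = 0 := by
  rw [IsCanonicalStep, dif_neg hi, dif_neg hi0]

theorem isCanonicalStep_of_totalBoundary_odd_eq_zero (c : ∀ i : ℤ, C i (k - i))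
    (h0 : c 0 = castC (C := C) rfl (by ring) c0) (hrange : ∀ i, i < 0 ∨ k < i → c i = 0)
    (hodd : ∀ i, Odd i → c i = 0) (hD : ∀ i, 0 ≤ i → i ≤ k - 1 → Odd i → totalBoundary d k c i = 0)
    (i : ℤ) : IsCanonicalStep d k c0 i (fun b _ => c b) (c i) := by
  by_cases hi : 0 < i ∧ i ≤ k ∧ Even i
  · obtain ⟨n, rfl⟩ : ∃ n, i = n + 1 := ⟨i - 1, by ring⟩
    refine (isCanonicalStep_iff_of_pos d k c0 c hi).2
      ((totalBoundary_eq_zero_iff d k c (by omega)).1 ?_)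
    exact hD n (by omega) (by omega) (Int.not_even_iff_odd.1 (Int.even_add_one.1 hi.2.2))
  by_cases hi0 : i = 0
  · subst hi0
    exact (isCanonicalStep_zero_iff d k c0 _ _).2 h0
  rw [isCanonicalStep_iff_eq_zero d k c0 hi hi0]
  rcases Int.even_or_odd i with he | ho
  · refine hrange i ?_
    by_contra! h
    exact hi ⟨by omega, h.2, he⟩
  · exact hodd i ho

end

theorem canonical_embedding_exists_unique
    {C : ℤ → ℤ → Type u} [∀ p i, AddCommGroup (C p i)]
    (d : ∀ j p i : ℤ, C p i →+ C (p + j - 1) (i - j))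
    (hrel : ∀ (j p i : ℤ) (x : C p i),
      ∑ q ∈ Finset.Icc (0 : ℤ) j,
        castC (C := C) (by ring) (by ring)
          (d q (p + (j - q) - 1) (i - (j - q)) (d (j - q) p i x)) =
        (0 : C (p + j - 2) (i - j)))
    (hd0 : ∀ p i : ℤ,
      (0 < p ∧ Even p → Function.Bijective (d 0 p i)) ∧
      (¬(0 < p ∧ Even p) → d 0 p i = 0)) :
    ∀ (k : ℤ) (c0 : C 0 k), 0 ≤ k →
      ∃! c : ∀ i : ℤ, C i (k - i),
        c 0 = castC (C := C) rfl (by ring) c0 ∧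
        (∀ i : ℤ, i < 0 ∨ k < i → c i = 0) ∧
        -- (1) `c_i = 0` for `i` odd
        (∀ i : ℤ, Odd i → c i = 0) ∧
        -- (2) on the components `d_i = ∑_{j=0}^{i+1} ∂_{[j]}(c_{i+1-j})` of `𝛛_k(c₀,…,c_k)`:
        (∀ i : ℤ, 0 ≤ i → i ≤ k - 1 → Odd i →
          (∑ j ∈ Finset.Icc (0 : ℤ) (i + 1),
            castC (C := C) (by ring) (by ring)
              (d j (i + 1 - j) (k - (i + 1 - j)) (c (i + 1 - j))) :
            C i (k - 1 - i)) = 0) ∧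
        (∀ i : ℤ, 0 < i → i ≤ k - 1 → Even i →
          d 0 i (k - 1 - i)
            ((∑ j ∈ Finset.Icc (0 : ℤ) (i + 1),
              castC (C := C) (by ring) (by ring)
                (d j (i + 1 - j) (k - (i + 1 - j)) (c (i + 1 - j))) :
              C i (k - 1 - i)))
          = - ∑ q ∈ (Finset.Icc (0 : ℤ) (i - 2)).filter (fun q => Even q),
              castC (C := C) (by ring) (by ring)
                (d (i - q) q (k - 1 - q)
                  ((∑ j ∈ Finset.Icc (0 : ℤ) (q + 1),
                    castC (C := C) (by ring) (by ring)
                      (d j (q + 1 - j) (k - (q + 1 - j)) (c (q + 1 - j))) :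
                    C q (k - 1 - q))))) := by
  intro k c0 hk
  obtain ⟨c, hc, huniq⟩ := (measure Int.toNat).wf.existsUnique_fix (IsCanonicalStep d k c0)
    (existsUnique_isCanonicalStep d k c0 fun p i => (hd0 p i).1)
  have hvanish : ∀ i, ¬(0 < i ∧ i ≤ k ∧ Even i) → i ≠ 0 → c i = 0 := fun i hi hi0 =>
    (isCanonicalStep_iff_eq_zero d k c0 hi hi0 _ _).1 (hc i)
  have hD : ∀ i, 0 ≤ i → i ≤ k - 1 → Odd i → totalBoundary d k c i = 0 := fun i hi0 hik hi =>
    (totalBoundary_eq_zero_iff d k c (by omega)).2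
      ((isCanonicalStep_iff_of_pos d k c0 c ⟨by omega, by omega, hi.add_one⟩).1 (hc (i + 1)))
  refine ⟨c, ⟨(isCanonicalStep_zero_iff d k c0 _ _).1 (hc 0),
    fun i hi => hvanish i (by omega) (by omega),
    fun i hi => hvanish i (fun h => Int.not_even_iff_odd.2 hi h.2.2) (by rintro rfl; simp at hi),
    hD, fun _ => d_zero_totalBoundary_eq_neg_sum d k hrel (fun i => (hd0 0 i).2 (by simp)) c hD⟩,
    ?_⟩
  rintro c' ⟨hc'0, hc'range, hc'odd, hc'D, -⟩
  exact huniq c' (isCanonicalStep_of_totalBoundary_odd_eq_zero d k c0 c' hc'0 hc'range hc'odd hc'D)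
end
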